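/- arXiv:0802.1591 — 10 statements merged into one kernel-verified Lean document; each statement's English description precedes it below -/
import Mathlib

section
/- Let X, Y be elements of an associative ring such that X^3 = 0, X Y X^2 = X^2 Y X, and (Y X^2)^2 = X^2 Y^2 X^2. Then X^2 Y^2 X^2 = 0. -/
theorem sq_mul_mul_sq_eq_zero_of_pow_three_eq_zero {M : Type*} [MonoidWithZero M] {X Y : M}
    (hX : X ^ 3 = 0) (hXY : X * Y * X ^ 2 = X ^ 2 * Y * X) :
    X ^ 2 * Y * X ^ 2 = 0 := by
  calc X ^ 2 * Y * X ^ 2 = X * (X * Y * X ^ 2) := by simp only [sq, mul_assoc]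
    _ = X ^ 3 * (Y * X) := by rw [hXY]; simp only [pow_succ, pow_zero, one_mul, mul_assoc]
    _ = 0 := by rw [hX, zero_mul]

/-- in an associative ring, `X^3 = 0`, `XYX^2 = X^2YX` and
`(YX^2)^2 = X^2Y^2X^2` imply `X^2Y^2X^2 = 0`. -/
theorem stmt_3 {A : Type*} [Ring A] (X Y : A)
    (h1 : X ^ 3 = 0) (h2 : X * Y * X ^ 2 = X ^ 2 * Y * X)
    (h3 : (Y * X ^ 2) ^ 2 = X ^ 2 * Y ^ 2 * X ^ 2) :
    X ^ 2 * Y ^ 2 * X ^ 2 = 0 := by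
  calc X ^ 2 * Y ^ 2 * X ^ 2 = (Y * X ^ 2) ^ 2 := h3.symm
    _ = Y * (X ^ 2 * Y * X ^ 2) := by simp only [sq, mul_assoc]
    _ = 0 := by rw [sq_mul_mul_sq_eq_zero_of_pow_three_eq_zero h1 h2, mul_zero]
end

section
/- Let L be a subalgebra of a Lie algebra Q over a ring with 1/2, 1/3 invertible, such that Q is a weak algebra of quotients of L, and suppose L is strongly non-degenerate. Then the quadratic annihilator of L in Q is zero: if q ∈ Q satisfies [q,[q,L]] = 0, then q = 0. -/
/-! Since `ad q` maps `L` into `L`, its restriction `D` is a derivation of `L` with `D² = 0`.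
For `c = D u` one gets `[c, [c, x]] = -[[c, u], D x]` and `(ad c)³ = 0`. These make
`[[c, u], c]` an absolute zero divisor of `L`, hence zero; polarizing this cubic identity in `u`
gives `(ad c)² = 0`, so `c = 0`. Thus `[q, L] = 0`, which in a weak algebra of quotients forces
`q = 0`. -/

theorem eq_zero_of_ofNat_nsmul_eq_zero (R : Type*) {M : Type*} [Semiring R] [AddCommMonoid M]
    [Module R M] (n : ℕ) [n.AtLeastTwo] [Invertible (ofNat(n) : R)] {x : M}
    (h : ofNat(n) • x = 0) : x = 0 := by
  rw [← ofNat_smul_eq_nsmul R] at h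
  simpa using congrArg (⅟(ofNat(n) : R) • ·) h

section LieIdentities

variable {R L : Type*} [CommRing R] [LieRing L] [LieAlgebra R L]

theorem lie_lie_lie_lie_eq_of_ad_cube_eq_zero [Invertible (3 : R)] {c : L}
    (hc : ∀ z : L, ⁅c, ⁅c, ⁅c, z⁆⁆⁆ = 0) (u z : L) :
    ⁅c, ⁅c, ⁅u, ⁅c, z⁆⁆⁆⁆ = ⁅c, ⁅u, ⁅c, ⁅c, z⁆⁆⁆⁆ := by
  have expand : ⁅⁅c, ⁅c, ⁅c, u⁆⁆⁆, z⁆ = ⁅c, ⁅c, ⁅c, ⁅u, z⁆⁆⁆⁆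
      - 3 • (⁅c, ⁅c, ⁅u, ⁅c, z⁆⁆⁆⁆ - ⁅c, ⁅u, ⁅c, ⁅c, z⁆⁆⁆⁆) - ⁅u, ⁅c, ⁅c, ⁅c, z⁆⁆⁆⁆ := by
    simp only [lie_lie, lie_sub]
    abel
  rw [hc, hc, hc, zero_lie, lie_zero, zero_sub, sub_zero, zero_eq_neg] at expand
  exact sub_eq_zero.mp (eq_zero_of_ofNat_nsmul_eq_zero R 3 expand)

theorem lie_lie_lie_eq (c u m : L) :
    ⁅⁅⁅c, u⁆, c⁆, m⁆ = 2 • ⁅c, ⁅u, ⁅c, m⁆⁆⁆ - ⁅u, ⁅c, ⁅c, m⁆⁆⁆ - ⁅c, ⁅c, ⁅u, m⁆⁆⁆ := by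
  simp only [lie_lie, sub_lie, lie_sub]
  abel

theorem lie_lie_lie_lie_lie_eq_zero {c u : L} (hccc : ∀ z : L, ⁅c, ⁅c, ⁅c, z⁆⁆⁆ = 0)
    (hccuc : ∀ z : L, ⁅c, ⁅c, ⁅u, ⁅c, z⁆⁆⁆⁆ = 0) (hcucc : ∀ z : L, ⁅c, ⁅u, ⁅c, ⁅c, z⁆⁆⁆⁆ = 0)
    (hccuucc : ∀ z : L, ⁅c, ⁅c, ⁅u, ⁅u, ⁅c, ⁅c, z⁆⁆⁆⁆⁆⁆ = 0) (m : L) :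
    ⁅⁅⁅c, u⁆, c⁆, ⁅⁅⁅c, u⁆, c⁆, m⁆⁆ = 0 := by
  simp only [lie_lie_lie_eq, lie_sub, lie_nsmul, hccc, hccuc, hcucc, hccuucc, lie_zero, smul_zero,
    sub_zero]

end LieIdentities

namespace LieDerivation

variable {R L : Type*} [CommRing R] [LieRing L] [LieAlgebra R L] {D : LieDerivation R L L}

theorem lie_apply_apply_eq_zero [Invertible (2 : R)] (hD : ∀ x, D (D x) = 0) (x y : L) :
    ⁅D x, D y⁆ = 0 := by
  have h : D (D ⁅x, y⁆) = 2 • ⁅D x, D y⁆ := by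
    simp only [apply_lie_eq_add, map_add, hD, lie_zero, zero_lie, zero_add, add_zero]
    abel
  exact eq_zero_of_ofNat_nsmul_eq_zero R 2 (by rw [← h, hD])

theorem apply_lie_apply_eq_zero [Invertible (2 : R)] (hD : ∀ x, D (D x) = 0) (x y : L) :
    D ⁅D x, y⁆ = 0 := by
  rw [apply_lie_eq_add, lie_apply_apply_eq_zero hD, hD, zero_lie, zero_add]

theorem lie_lie_apply_eq [Invertible (2 : R)] (hD : ∀ x, D (D x) = 0) (u x : L) :
    ⁅⁅D u, u⁆, D x⁆ = ⁅D u, ⁅u, D x⁆⁆ := by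
  rw [leibniz_lie (D u), lie_apply_apply_eq_zero hD, lie_zero, add_zero]

theorem lie_apply_lie_apply_eq [Invertible (2 : R)] (hD : ∀ x, D (D x) = 0) (u x : L) :
    ⁅D u, ⁅D u, x⁆⁆ = -⁅⁅D u, u⁆, D x⁆ := by
  have h := lie_apply_apply_eq_zero hD u ⁅u, x⁆
  rw [apply_lie_eq_add, lie_add, ← lie_lie_apply_eq hD] at h
  exact eq_neg_of_add_eq_zero_right h

theorem lie_lie_lie_apply_lie_lie_lie_apply_eq_zero [Invertible (2 : R)] [Invertible (3 : R)]
    (hD : ∀ x, D (D x) = 0) (u m : L) :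
    ⁅⁅⁅D u, u⁆, D u⁆, ⁅⁅⁅D u, u⁆, D u⁆, m⁆⁆ = 0 := by
  have hDC : ∀ z : L, D ⁅D u, z⁆ = 0 := apply_lie_apply_eq_zero hD u
  have hccc : ∀ z : L, ⁅D u, ⁅D u, ⁅D u, z⁆⁆⁆ = 0 := fun z => by
    rw [lie_apply_lie_apply_eq hD, hDC, lie_zero, neg_zero]
  have hccuc' : ∀ z : L, ⁅D u, ⁅D u, ⁅u, ⁅D u, z⁆⁆⁆⁆ = ⁅D u, ⁅u, ⁅⁅D u, u⁆, D z⁆⁆⁆ := fun z => by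
    have hw : ⁅D u, ⁅⁅D u, u⁆, D z⁆⁆ = 0 := by
      rw [← neg_eq_zero, ← lie_neg, ← lie_apply_lie_apply_eq hD, hccc]
    rw [lie_apply_lie_apply_eq hD, apply_lie_eq_add, hDC, lie_zero, zero_add,
      lie_apply_lie_apply_eq hD, lie_neg, neg_neg, lie_lie, hw, lie_zero, sub_zero]
  have hcucc' : ∀ z : L, ⁅D u, ⁅u, ⁅D u, ⁅D u, z⁆⁆⁆⁆ = -⁅D u, ⁅u, ⁅⁅D u, u⁆, D z⁆⁆⁆ := fun z => by
    rw [lie_apply_lie_apply_eq hD u z, lie_neg, lie_neg]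
  have h0 : ∀ z : L, ⁅D u, ⁅u, ⁅⁅D u, u⁆, D z⁆⁆⁆ = 0 := fun z => by
    have h := (hccuc' z).symm.trans
      ((lie_lie_lie_lie_eq_of_ad_cube_eq_zero (R := R) hccc u z).trans (hcucc' z))
    refine eq_zero_of_ofNat_nsmul_eq_zero R 2 ?_
    rw [two_nsmul]
    nth_rw 1 [h]
    exact neg_add_cancel _
  have hccuc : ∀ z : L, ⁅D u, ⁅D u, ⁅u, ⁅D u, z⁆⁆⁆⁆ = 0 := fun z => (hccuc' z).trans (h0 z)
  have hcucc : ∀ z : L, ⁅D u, ⁅u, ⁅D u, ⁅D u, z⁆⁆⁆⁆ = 0 := fun z => by rw [hcucc', h0, neg_zero]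
  have hccuucc : ∀ z : L, ⁅D u, ⁅D u, ⁅u, ⁅u, ⁅D u, ⁅D u, z⁆⁆⁆⁆⁆⁆ = 0 := fun z => by
    rw [lie_apply_lie_apply_eq hD u, apply_lie_eq_add, apply_lie_eq_add, hDC, hccc, hcucc,
      lie_zero, zero_add, lie_zero, add_zero, lie_zero, neg_zero]
  exact lie_lie_lie_lie_lie_eq_zero hccc hccuc hcucc hccuucc m

/-- Polarization of the cubic map `u ↦ ⁅⁅D u, u⁆, D u⁆`, whose three mixed terms coincide. -/
theorem lie_lie_apply_apply_eq_zero_of_forall [Invertible (2 : R)] [Invertible (3 : R)]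
    (hD : ∀ x, D (D x) = 0) (he : ∀ u, ⁅⁅D u, u⁆, D u⁆ = 0) (u m : L) :
    ⁅⁅D u, u⁆, D m⁆ = 0 := by
  have r₁ : ⁅⁅D u, m⁆, D u⁆ = ⁅⁅D u, u⁆, D m⁆ := by
    rw [← lie_skew, lie_apply_lie_apply_eq hD, neg_neg]
  have r₂ : ⁅⁅D m, u⁆, D u⁆ = ⁅⁅D u, u⁆, D m⁆ := by
    rw [← lie_skew, ← lie_skew (D m) u, lie_neg, neg_neg, lie_lie_apply_eq hD]
  have expand : ⁅⁅D (u + m), u + m⁆, D (u + m)⁆ - ⁅⁅D (u - m), u - m⁆, D (u - m)⁆ =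
      2 • (⁅⁅D u, u⁆, D m⁆ + ⁅⁅D u, m⁆, D u⁆ + ⁅⁅D m, u⁆, D u⁆) + 2 • ⁅⁅D m, m⁆, D m⁆ := by
    simp only [map_add, map_sub, add_lie, sub_lie, lie_add, lie_sub]
    abel
  rw [he, he, he, r₁, r₂, sub_zero, smul_zero, add_zero] at expand
  refine eq_zero_of_ofNat_nsmul_eq_zero R 3 (eq_zero_of_ofNat_nsmul_eq_zero R 2 ?_)
  calc 2 • 3 • ⁅⁅D u, u⁆, D m⁆
      = 2 • (⁅⁅D u, u⁆, D m⁆ + ⁅⁅D u, u⁆, D m⁆ + ⁅⁅D u, u⁆, D m⁆) := by abel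
    _ = 0 := expand.symm

theorem eq_zero_of_apply_apply_eq_zero [Invertible (2 : R)] [Invertible (3 : R)]
    (hL : ∀ x : L, (∀ y : L, ⁅x, ⁅x, y⁆⁆ = 0) → x = 0) (hD : ∀ x, D (D x) = 0) : D = 0 := by
  have he : ∀ u, ⁅⁅D u, u⁆, D u⁆ = 0 := fun u =>
    hL _ (lie_lie_lie_apply_lie_lie_lie_apply_eq_zero hD u)
  ext u
  exact hL _ fun x => by
    rw [lie_apply_lie_apply_eq hD, lie_lie_apply_apply_eq_zero_of_forall hD he, neg_zero]

end LieDerivation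

namespace LieSubalgebra

variable {R Q : Type*} [CommRing R] [LieRing Q] [LieAlgebra R Q]

def adDerivation (L : LieSubalgebra R Q) (q : Q) (hq : ∀ y ∈ L, ⁅q, y⁆ ∈ L) :
    LieDerivation R L L where
  toFun y := ⟨⁅q, (y : Q)⁆, hq y y.2⟩
  map_add' x y := Subtype.ext (lie_add q (x : Q) y)
  map_smul' r x := Subtype.ext (lie_smul r q (x : Q))
  leibniz' x y := Subtype.ext <| by
    simp only [LinearMap.coe_mk, AddHom.coe_mk, coe_bracket, AddSubgroupClass.coe_sub]
    rw [leibniz_lie, ← lie_skew (y : Q)]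
    abel

end LieSubalgebra

/-- if `Q` is a weak algebra of quotients of a strongly non-degenerate
subalgebra `L`, then the quadratic annihilator of `L` in `Q` is zero. -/
theorem stmt_5 {R Q : Type*} [CommRing R] [Invertible (2 : R)] [Invertible (3 : R)]
    [LieRing Q] [LieAlgebra R Q] (L : LieSubalgebra R Q)
    (hweak : ∀ q : Q, q ≠ 0 → (∃ l ∈ L, ⁅l, q⁆ ≠ 0) ∧ ∀ l ∈ L, ⁅l, q⁆ ∈ L)
    (hL : ∀ x ∈ L, (∀ y ∈ L, ⁅x, ⁅x, y⁆⁆ = 0) → x = 0) :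
    ∀ q : Q, (∀ y ∈ L, ⁅q, ⁅q, y⁆⁆ = 0) → q = 0 := by
  intro q hq
  by_contra hq0
  obtain ⟨⟨l, hl, hlq⟩, hLq⟩ := hweak q hq0
  have hqL : ∀ y ∈ L, ⁅q, y⁆ ∈ L := fun y hy => by
    rw [← lie_skew]
    exact neg_mem (hLq y hy)
  have hD : L.adDerivation q hqL = 0 :=
    LieDerivation.eq_zero_of_apply_apply_eq_zero
      (fun x hx => Subtype.ext (hL x x.2 fun y hy => congrArg Subtype.val (hx ⟨y, hy⟩)))
      (fun x => Subtype.ext (hq x x.2))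
  apply hlq
  rw [← lie_skew, neg_eq_zero]
  exact congrArg Subtype.val (LieDerivation.congr_fun hD ⟨l, hl⟩)
end

section
/- Let I be a strongly non-degenerate ideal of a Lie algebra L over a ring with 1/2, 1/3 invertible, and suppose Ann_L(I) = 0. Then L is strongly non-degenerate. -/
/-!
If `ad x ^ 2 = 0` then `ad x` is a sandwich, `ad x * ad w * ad x = 0`, because
`ad ⁅x, ⁅x, w⁆⁆ = -2 • ad x * ad w * ad x`. For `c ∈ I` write `A = ad x`, `B = ad c`. Modulo the
relations `A² = ABA = 0` one computes `(ad ⁅⁅x, c⁆, ⁅⁅x, c⁆, c⁆⁆)² = 9 ABBABBA · BBA` and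
`A · ad ⁅c, ⁅c, ⁅c, ⁅x, c⁆⁆⁆⁆ · A = -6 ABBABBA`; the latter vanishes by the sandwich property, so
`⁅⁅x, c⁆, ⁅⁅x, c⁆, c⁆⁆ ∈ I` has `ad² = 0` and is zero by strong non-degeneracy of `I`.
Polarizing this cubic in `c` gives `6 • ⁅⁅x, b⁆, ⁅⁅x, b⁆, z⁆⁆ = 0` for `b, z ∈ I`, hence
`⁅x, b⁆ = 0` for all `b ∈ I`, and `x ∈ Ann_L(I) = 0`.
-/

section Ring

variable {S : Type*} [Ring S] {a b : S}

theorem lie_lie_of_mul_self_eq_zero (haa : a * a = 0) (w : S) :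
    ⁅a, ⁅a, w⁆⁆ = -(2 * (a * w * a)) := by
  have haa' : ∀ t, a * (a * t) = 0 := fun t => by rw [← mul_assoc, haa, zero_mul]
  simp only [Ring.lie_def, mul_sub, sub_mul, mul_assoc, haa, haa', mul_zero, sub_zero, zero_sub]
  noncomm_ring

-- After reassociating to the right, `simp` deletes every word containing `aa` or `aba`.
theorem mul_lie_lie_lie_lie_mul_of_mul_self_eq_zero (haa : a * a = 0) (haba : a * b * a = 0) :
    a * ⁅b, ⁅b, ⁅b, ⁅a, b⁆⁆⁆⁆ * a = -(6 * (a * b * b * a * b * b * a)) := by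
  have haa' : ∀ t, a * (a * t) = 0 := fun t => by rw [← mul_assoc, haa, zero_mul]
  have haba' : a * (b * a) = 0 := by rw [← mul_assoc, haba]
  have haba'' : ∀ t, a * (b * (a * t)) = 0 := fun t => by
    rw [← mul_assoc, ← mul_assoc, haba, zero_mul]
  simp only [Ring.lie_def, mul_sub, sub_mul, mul_assoc, haa, haa', haba', haba'', mul_zero,
    neg_mul, sub_zero, zero_sub]
  noncomm_ring

theorem lie_lie_mul_self_of_mul_self_eq_zero (haa : a * a = 0) (haba : a * b * a = 0) :
    ⁅⁅a, b⁆, ⁅⁅a, b⁆, b⁆⁆ * ⁅⁅a, b⁆, ⁅⁅a, b⁆, b⁆⁆ =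
      9 * (a * b * b * a * b * b * a) * (b * b * a) := by
  have haa' : ∀ t, a * (a * t) = 0 := fun t => by rw [← mul_assoc, haa, zero_mul]
  have haba' : a * (b * a) = 0 := by rw [← mul_assoc, haba]
  have haba'' : ∀ t, a * (b * (a * t)) = 0 := fun t => by
    rw [← mul_assoc, ← mul_assoc, haba, zero_mul]
  simp only [Ring.lie_def, mul_sub, sub_mul, mul_assoc, haa', haba', haba'', mul_zero, mul_neg,
    neg_mul, neg_zero, sub_zero, zero_sub]
  noncomm_ring

end Ring

theorem IsUnit.ofNat_of_algebra {R A : Type*} [CommSemiring R] [Semiring A] [Algebra R A]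
    (n : ℕ) [n.AtLeastTwo] (h : IsUnit (ofNat(n) : R)) : IsUnit (ofNat(n) : A) := by
  simpa only [map_ofNat] using h.map (algebraMap R A)

namespace LieRing

def IsAbsoluteZeroDivisor {L : Type*} [LieRing L] (x : L) : Prop := ∀ y : L, ⁅x, ⁅x, y⁆⁆ = 0

namespace IsAbsoluteZeroDivisor

open LieAlgebra

variable {R L : Type*} [CommRing R] [LieRing L] [LieAlgebra R L] {x : L}

variable (R) in
theorem ad_mul_self_eq_zero (hx : IsAbsoluteZeroDivisor x) : ad R L x * ad R L x = 0 :=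
  LinearMap.ext hx

theorem sandwich (hx : IsAbsoluteZeroDivisor x) (h2 : IsUnit (2 : R)) (w : L) :
    ad R L x * ad R L w * ad R L x = 0 := by
  have h : ⁅ad R L x, ⁅ad R L x, ad R L w⁆⁆ = 0 := by
    simpa only [LieHom.map_lie, map_zero] using congrArg (ad R L) (hx w)
  rw [lie_lie_of_mul_self_eq_zero (hx.ad_mul_self_eq_zero R), neg_eq_zero] at h
  exact (h2.ofNat_of_algebra 2).mul_right_eq_zero.1 h

theorem lie_lie_lie_eq_zero (hx : IsAbsoluteZeroDivisor x) (h2 : IsUnit (2 : R)) (w y : L) :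
    ⁅x, ⁅w, ⁅x, y⁆⁆⁆ = 0 :=
  LinearMap.congr_fun (hx.sandwich h2 w) y

theorem lie_lie_lie_eq_zero' (hx : IsAbsoluteZeroDivisor x) (h2 : IsUnit (2 : R)) (p q : L) :
    ⁅⁅x, p⁆, ⁅x, q⁆⁆ = 0 := by
  rw [lie_lie, hx.lie_lie_lie_eq_zero h2, hx q, lie_zero, sub_zero]

theorem isAbsoluteZeroDivisor_lie_lie (hx : IsAbsoluteZeroDivisor x) (h6 : IsUnit (6 : R))
    (c : L) : IsAbsoluteZeroDivisor ⁅⁅x, c⁆, ⁅⁅x, c⁆, c⁆⁆ := by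
  have h2 : IsUnit (2 : R) := isUnit_of_mul_isUnit_left (y := 3) (by norm_num; exact h6)
  have haa := hx.ad_mul_self_eq_zero R
  have haba := hx.sandwich h2 c
  have hword : ad R L x * ad R L c * ad R L c * ad R L x * ad R L c * ad R L c * ad R L x = 0 := by
    have h := mul_lie_lie_lie_lie_mul_of_mul_self_eq_zero haa haba
    have hzero :
        ad R L x * ⁅ad R L c, ⁅ad R L c, ⁅ad R L c, ⁅ad R L x, ad R L c⁆⁆⁆⁆ * ad R L x = 0 := by
      simpa only [LieHom.map_lie] using hx.sandwich h2 ⁅c, ⁅c, ⁅c, ⁅x, c⁆⁆⁆⁆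
    rw [hzero, eq_comm, neg_eq_zero] at h
    exact (h6.ofNat_of_algebra 6).mul_right_eq_zero.1 h
  have hsq : ad R L ⁅⁅x, c⁆, ⁅⁅x, c⁆, c⁆⁆ * ad R L ⁅⁅x, c⁆, ⁅⁅x, c⁆, c⁆⁆ = 0 := by
    simp only [LieHom.map_lie]
    rw [lie_lie_mul_self_of_mul_self_eq_zero haa haba, hword, mul_zero, zero_mul]
  exact LinearMap.congr_fun hsq

theorem polarization (hx : IsAbsoluteZeroDivisor x) (h2 : IsUnit (2 : R)) (b z : L) :
    ⁅⁅x, b + z⁆, ⁅⁅x, b + z⁆, b + z⁆⁆ - ⁅⁅x, b - z⁆, ⁅⁅x, b - z⁆, b - z⁆⁆ -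
      (2 : R) • ⁅⁅x, z⁆, ⁅⁅x, z⁆, z⁆⁆ = (6 : R) • ⁅⁅x, b⁆, ⁅⁅x, b⁆, z⁆⁆ := by
  have hleft : ⁅⁅x, b⁆, ⁅⁅x, z⁆, b⁆⁆ = ⁅⁅x, b⁆, ⁅⁅x, b⁆, z⁆⁆ := by
    rw [lie_lie x z b, lie_sub, hx.lie_lie_lie_eq_zero' h2, zero_sub, ← lie_neg, lie_skew]
  have hright : ⁅⁅x, z⁆, ⁅⁅x, b⁆, b⁆⁆ = ⁅⁅x, b⁆, ⁅⁅x, b⁆, z⁆⁆ := by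
    rw [lie_lie x b b, lie_self, lie_zero, zero_sub, lie_neg, leibniz_lie,
      hx.lie_lie_lie_eq_zero' h2, lie_zero, add_zero, ← lie_skew, hleft, neg_neg]
  simp only [lie_add, add_lie, lie_sub, sub_lie, hleft, hright]
  module

end IsAbsoluteZeroDivisor

end LieRing

/-- if `I` is a strongly non-degenerate ideal of `L` with
`Ann_L(I) = 0`, then `L` is strongly non-degenerate. -/
theorem stmt_7 {R L : Type*} [CommRing R] [Invertible (2 : R)] [Invertible (3 : R)]
    [LieRing L] [LieAlgebra R L] (I : LieIdeal R L)
    (hI : ∀ y ∈ I, (∀ z ∈ I, ⁅y, ⁅y, z⁆⁆ = 0) → y = 0)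
    (hann : ∀ a : L, (∀ b ∈ I, ⁅a, b⁆ = 0) → a = 0) :
    ∀ x : L, (∀ y : L, ⁅x, ⁅x, y⁆⁆ = 0) → x = 0 := by
  intro x (hx : LieRing.IsAbsoluteZeroDivisor x)
  have h2 : IsUnit (2 : R) := isUnit_of_invertible 2
  have h6 : IsUnit (6 : R) := by
    simpa only [show (2 : R) * 3 = 6 by norm_num] using h2.mul (isUnit_of_invertible (3 : R))
  have hcube : ∀ c ∈ I, ⁅⁅x, c⁆, ⁅⁅x, c⁆, c⁆⁆ = 0 := fun c hc =>
    hI _ (I.lie_mem (I.lie_mem hc)) (fun z _ => hx.isAbsoluteZeroDivisor_lie_lie h6 c z)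
  have hsq : ∀ b ∈ I, ∀ z ∈ I, ⁅⁅x, b⁆, ⁅⁅x, b⁆, z⁆⁆ = 0 := by
    intro b hb z hz
    have h := hx.polarization h2 b z
    rw [hcube _ (add_mem hb hz), hcube _ (sub_mem hb hz), hcube z hz, smul_zero, sub_zero,
      sub_zero] at h
    exact h6.smul_eq_zero.1 h.symm
  exact hann x fun b hb => hI _ (I.lie_mem hb) (hsq b hb)
end

section
/- Let I be an essential ideal of a Lie algebra L over a ring with 1/2, 1/3 invertible, with I strongly non-degenerate and Z(L) = 0. Then Ann_L(I) = 0, and consequently L is strongly non-degenerate. -/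
/-!
The annihilator of `I` is an ideal meeting `I` trivially (its elements in `I` are central in `I`),
so it vanishes because `I` is essential.

Let `x` be an absolute zero divisor of `L`, i.e. `ad x ^ 2 = 0`. With `1/2`, this forces
`ad x ∘ ad a ∘ ad x = 0` and `ad ⁅x, a⁆ ∘ ad ⁅x, b⁆ = -ad x ∘ ad a ∘ ad b ∘ ad x`, and a
computation in the spirit of Kostrikin shows that `ad ⁅x, c⁆ ^ 2 c` is again an absolute zero
divisor of `L`. For `c ∈ I` it lies in `I`, hence vanishes. Polarizing this cubic identity
(with `1/2` and `1/3`) gives `ad ⁅x, b⁆ ^ 2 w = 0` for `b, w ∈ I`, so `⁅x, b⁆ = 0` by strong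
non-degeneracy of `I`: `x` annihilates `I`, hence `x = 0`.
-/

theorem eq_zero_of_eq_neg {R M : Type*} [CommRing R] [AddCommGroup M] [Module R M]
    (h2 : IsUnit (2 : R)) {v : M} (h : v = -v) : v = 0 :=
  h2.smul_eq_zero.mp <| by rw [two_smul]; nth_rw 1 [h]; exact neg_add_cancel v

theorem lie_lie_lie_of_lie_eq_zero {L : Type*} [LieRing L] {z Y : L} (c : L)
    (h : ⁅z, Y⁆ = 0) : ⁅⁅z, ⁅z, c⁆⁆, Y⁆ = ⁅z, ⁅z, ⁅c, Y⁆⁆⁆ := by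
  rw [lie_lie, lie_lie z c Y, h, lie_zero, lie_zero, sub_zero, sub_zero]

def IsAbsZeroDivisor {L : Type*} [LieRing L] (x : L) : Prop := ∀ y : L, ⁅x, ⁅x, y⁆⁆ = 0

namespace IsAbsZeroDivisor

variable {R L : Type*} [CommRing R] [LieRing L] [LieAlgebra R L] {x : L}

theorem lie_lie_lie_eq_zero (h2 : IsUnit (2 : R)) (hx : IsAbsZeroDivisor x) (a b : L) :
    ⁅⁅x, a⁆, ⁅x, b⁆⁆ = 0 := by
  refine eq_zero_of_eq_neg h2 ?_
  calc ⁅⁅x, a⁆, ⁅x, b⁆⁆ = ⁅x, ⁅a, ⁅x, b⁆⁆⁆ := by rw [leibniz_lie x a, hx b, lie_zero, add_zero]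
    _ = -⁅⁅x, a⁆, ⁅x, b⁆⁆ := by
      rw [leibniz_lie a x b, lie_add, hx, add_zero, leibniz_lie x ⁅a, x⁆ b, ← lie_skew a x,
        lie_neg, hx, neg_zero, zero_lie, zero_add, neg_lie]

theorem sandwich (h2 : IsUnit (2 : R)) (hx : IsAbsZeroDivisor x) (a b : L) :
    ⁅x, ⁅a, ⁅x, b⁆⁆⁆ = 0 := by
  rw [leibniz_lie, hx b, lie_zero, add_zero, hx.lie_lie_lie_eq_zero h2]

theorem leibniz_lie_lie (h2 : IsUnit (2 : R)) (hx : IsAbsZeroDivisor x) (a b n : L) :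
    ⁅⁅x, a⁆, ⁅b, ⁅x, n⁆⁆⁆ = ⁅⁅⁅x, a⁆, b⁆, ⁅x, n⁆⁆ := by
  rw [leibniz_lie, hx.lie_lie_lie_eq_zero h2, lie_zero, add_zero]

theorem lie_lie_lie_lie_eq_neg (h2 : IsUnit (2 : R)) (hx : IsAbsZeroDivisor x) (a b w : L) :
    ⁅⁅x, a⁆, ⁅⁅x, b⁆, w⁆⁆ = -⁅x, ⁅a, ⁅b, ⁅x, w⁆⁆⁆⁆ := by
  rw [lie_lie x b w, lie_sub, hx.lie_lie_lie_eq_zero h2, zero_sub, neg_inj, lie_lie,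
    hx.sandwich h2, lie_zero, sub_zero]

theorem lie_lie_lie_lie_eq_lie_lie_lie (h2 : IsUnit (2 : R)) (hx : IsAbsZeroDivisor x)
    (c n : L) :
    ⁅⁅x, c⁆, ⁅⁅c, ⁅c, ⁅x, c⁆⁆⁆, ⁅x, n⁆⁆⁆ = ⁅⁅c, ⁅x, ⁅c, ⁅c, ⁅x, c⁆⁆⁆⁆⁆, ⁅x, n⁆⁆ := by
  have hsand : ⁅⁅x, c⁆, ⁅c, ⁅x, c⁆⁆⁆ = ⁅x, ⁅c, ⁅c, ⁅x, c⁆⁆⁆⁆ := by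
    rw [leibniz_lie x c, hx.sandwich h2, lie_zero, add_zero]
  have hskew : ⁅⁅x, c⁆, c⁆ = -⁅c, ⁅x, c⁆⁆ := (lie_skew _ c).symm
  have h₁ : ⁅⁅x, c⁆, ⁅c, ⁅⁅c, ⁅x, c⁆⁆, ⁅x, n⁆⁆⁆⁆ = -⁅⁅c, ⁅x, c⁆⁆, ⁅⁅c, ⁅x, c⁆⁆, ⁅x, n⁆⁆⁆ := by
    rw [leibniz_lie ⁅x, c⁆ c, hx.leibniz_lie_lie h2, hsand, hx.lie_lie_lie_eq_zero h2, lie_zero,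
      add_zero, hskew, neg_lie]
  have h₂ : ⁅⁅x, c⁆, ⁅⁅c, ⁅x, c⁆⁆, ⁅c, ⁅x, n⁆⁆⁆⁆ =
      ⁅⁅⁅x, ⁅c, ⁅c, ⁅x, c⁆⁆⁆⁆, c⁆, ⁅x, n⁆⁆ - ⁅⁅c, ⁅x, c⁆⁆, ⁅⁅c, ⁅x, c⁆⁆, ⁅x, n⁆⁆⁆ := by
    rw [leibniz_lie ⁅x, c⁆ ⁅c, ⁅x, c⁆⁆, hsand, hx.leibniz_lie_lie h2, hx.leibniz_lie_lie h2, hskew,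
      neg_lie, lie_neg, sub_eq_add_neg]
  rw [lie_lie c ⁅c, ⁅x, c⁆⁆, lie_sub, h₁, h₂, ← lie_skew c ⁅x, ⁅c, ⁅c, ⁅x, c⁆⁆⁆⁆, neg_lie]
  abel

theorem lie_lie_lie_lie_lie_eq_zero (h2 : IsUnit (2 : R)) (hx : IsAbsZeroDivisor x) (c n : L) :
    ⁅⁅x, c⁆, ⁅⁅x, ⁅c, ⁅c, ⁅x, c⁆⁆⁆⁆, n⁆⁆ = 0 := by
  have h₁ : ⁅⁅x, c⁆, ⁅⁅x, ⁅c, ⁅c, ⁅x, c⁆⁆⁆⁆, n⁆⁆ = -⁅⁅c, ⁅x, ⁅c, ⁅c, ⁅x, c⁆⁆⁆⁆⁆, ⁅x, n⁆⁆ := by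
    rw [hx.lie_lie_lie_lie_eq_neg h2, leibniz_lie x c, hx.sandwich h2, lie_zero, add_zero,
      hx.lie_lie_lie_lie_eq_lie_lie_lie h2]
  have h₂ : ⁅⁅x, c⁆, ⁅⁅x, ⁅c, ⁅c, ⁅x, c⁆⁆⁆⁆, n⁆⁆ = ⁅⁅c, ⁅x, ⁅c, ⁅c, ⁅x, c⁆⁆⁆⁆⁆, ⁅x, n⁆⁆ := by
    rw [leibniz_lie ⁅x, c⁆, hx.lie_lie_lie_eq_zero h2, zero_lie, zero_add,
      hx.lie_lie_lie_lie_eq_neg h2, leibniz_lie x ⁅c, ⁅c, ⁅x, c⁆⁆⁆, hx.sandwich h2, lie_zero,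
      add_zero, hx.leibniz_lie_lie h2, ← lie_skew c ⁅x, ⁅c, ⁅c, ⁅x, c⁆⁆⁆⁆, neg_lie]
  rw [h₂, eq_zero_of_eq_neg h2 (h₂.symm.trans h₁)]

theorem lie_lie_lie_lie_eq_zero_of_lie_eq_zero (h2 : IsUnit (2 : R)) (hx : IsAbsZeroDivisor x)
    {c Y : L} (hxY : ⁅x, Y⁆ = 0) (hzY : ⁅⁅x, c⁆, Y⁆ = 0) : ⁅⁅⁅x, c⁆, ⁅⁅x, c⁆, c⁆⁆, Y⁆ = 0 := by
  have hxcY : ⁅x, ⁅c, Y⁆⁆ = 0 := by rw [leibniz_lie, hzY, hxY, lie_zero, add_zero]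
  rw [lie_lie_lie_of_lie_eq_zero c hzY, hx.lie_lie_lie_lie_eq_neg h2, hxcY, lie_zero, lie_zero,
    lie_zero, neg_zero]

theorem isAbsZeroDivisor_lie_lie (h2 : IsUnit (2 : R)) (hx : IsAbsZeroDivisor x) (c : L) :
    IsAbsZeroDivisor ⁅⁅x, c⁆, ⁅⁅x, c⁆, c⁆⁆ := by
  intro m
  have hd : ⁅⁅x, c⁆, ⁅⁅x, c⁆, c⁆⁆ = ⁅x, -⁅c, ⁅c, ⁅x, c⁆⁆⁆⁆ := by
    rw [lie_neg]; exact hx.lie_lie_lie_lie_eq_neg h2 c c c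
  refine hx.lie_lie_lie_lie_eq_zero_of_lie_eq_zero h2 ?_ ?_
  · rw [hd, leibniz_lie, hx, zero_lie, zero_add, hx.lie_lie_lie_eq_zero h2]
  · rw [hd, lie_neg, neg_lie, lie_neg, hx.lie_lie_lie_lie_lie_eq_zero h2, neg_zero]

theorem lie_lie_lie_lie_eq_zero_of_add_of_sub (h2 : IsUnit (2 : R)) (h3 : IsUnit (3 : R))
    (hx : IsAbsZeroDivisor x) {b w : L} (hw : ⁅⁅x, w⁆, ⁅⁅x, w⁆, w⁆⁆ = 0)
    (hadd : ⁅⁅x, b + w⁆, ⁅⁅x, b + w⁆, b + w⁆⁆ = 0)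
    (hsub : ⁅⁅x, b - w⁆, ⁅⁅x, b - w⁆, b - w⁆⁆ = 0) : ⁅⁅x, b⁆, ⁅⁅x, b⁆, w⁆⁆ = 0 := by
  have h₁₂ : ⁅⁅x, b⁆, ⁅⁅x, w⁆, b⁆⁆ = ⁅⁅x, b⁆, ⁅⁅x, b⁆, w⁆⁆ := by
    have : ⁅⁅x, b⁆, w⁆ - ⁅⁅x, w⁆, b⁆ = ⁅x, ⁅b, w⁆⁆ := by
      rw [leibniz_lie x b w, ← lie_skew ⁅x, w⁆ b]; abel
    rw [← sub_eq_zero, ← neg_sub, ← lie_sub, this, hx.lie_lie_lie_eq_zero h2, neg_zero]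
  have h₁₃ : ⁅⁅x, w⁆, ⁅⁅x, b⁆, b⁆⁆ = ⁅⁅x, b⁆, ⁅⁅x, b⁆, w⁆⁆ := by
    rw [← h₁₂, leibniz_lie ⁅x, b⁆ ⁅x, w⁆ b, hx.lie_lie_lie_eq_zero h2, zero_lie, zero_add]
  simp only [lie_add, add_lie] at hadd
  simp only [lie_sub, sub_lie] at hsub
  -- with `T a b c = ⁅⁅x, a⁆, ⁅⁅x, b⁆, c⁆⁆` and `Q c = T c c c`, the mixed terms agree, so
  -- `6 • T b b w = Q (b + w) - Q (b - w) - 2 • Q w`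
  refine h3.smul_eq_zero.mp (h2.smul_eq_zero.mp ?_)
  linear_combination (norm := module) hadd - hsub - (2 : R) • hw - (2 : R) • h₁₂ - (2 : R) • h₁₃

end IsAbsZeroDivisor

theorem LieIdeal.eq_zero_of_forall_lie_eq_zero {R L : Type*} [CommRing R] [LieRing L]
    [LieAlgebra R L] {I : LieIdeal R L} (hess : ∀ J : LieIdeal R L, J ≠ ⊥ → I ⊓ J ≠ ⊥)
    (hI : ∀ y ∈ I, (∀ z ∈ I, ⁅y, z⁆ = 0) → y = 0) {a : L} (ha : ∀ b ∈ I, ⁅a, b⁆ = 0) :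
    a = 0 := by
  have mem_ann : ∀ y, y ∈ LieModule.ker R L I ↔ ∀ b ∈ I, ⁅y, b⁆ = 0 := by
    simp [LieModule.mem_ker, Subtype.ext_iff]
  have hann : LieModule.ker R L I = ⊥ := by
    by_contra hne
    refine hess _ hne (eq_bot_iff.mpr fun y hy => ?_)
    rw [LieSubmodule.mem_inf, mem_ann] at hy
    exact (LieSubmodule.mem_bot y).mpr (hI y hy.1 hy.2)
  simpa [hann] using (mem_ann a).mpr ha

theorem stmt_8_general {R L : Type*} [CommRing R] [Invertible (2 : R)] [Invertible (3 : R)]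
    [LieRing L] [LieAlgebra R L] (I : LieIdeal R L)
    (hess : ∀ J : LieIdeal R L, J ≠ ⊥ → I ⊓ J ≠ ⊥)
    (hI : ∀ y ∈ I, (∀ z ∈ I, ⁅y, ⁅y, z⁆⁆ = 0) → y = 0) :
    (∀ a : L, (∀ b ∈ I, ⁅a, b⁆ = 0) → a = 0) ∧
      (∀ x : L, (∀ y : L, ⁅x, ⁅x, y⁆⁆ = 0) → x = 0) := by
  have h2 := isUnit_of_invertible (2 : R)
  have h3 := isUnit_of_invertible (3 : R)
  have hann : ∀ a : L, (∀ b ∈ I, ⁅a, b⁆ = 0) → a = 0 := fun a =>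
    LieIdeal.eq_zero_of_forall_lie_eq_zero hess fun y hy hyI =>
      hI y hy fun z hz => by rw [hyI z hz, lie_zero]
  refine ⟨hann, fun x hx => hann x fun b hb => ?_⟩
  have hx : IsAbsZeroDivisor x := hx
  have hdiag : ∀ c ∈ I, ⁅⁅x, c⁆, ⁅⁅x, c⁆, c⁆⁆ = 0 := fun c hc =>
    hI _ (I.lie_mem (I.lie_mem hc)) fun m _ => hx.isAbsZeroDivisor_lie_lie h2 c m
  exact hI _ (I.lie_mem hb) fun w hw => hx.lie_lie_lie_lie_eq_zero_of_add_of_sub h2 h3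
    (hdiag w hw) (hdiag _ (I.add_mem hb hw)) (hdiag _ (I.sub_mem hb hw))

/-- if `I` is an essential strongly non-degenerate ideal of `L` and the
centre of `L` is zero, then `Ann_L(I) = 0` and `L` is strongly non-degenerate. -/
theorem stmt_8 {R L : Type*} [CommRing R] [Invertible (2 : R)] [Invertible (3 : R)]
    [LieRing L] [LieAlgebra R L] (I : LieIdeal R L)
    (hess : ∀ J : LieIdeal R L, J ≠ ⊥ → I ⊓ J ≠ ⊥)
    (hI : ∀ y ∈ I, (∀ z ∈ I, ⁅y, ⁅y, z⁆⁆ = 0) → y = 0)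
    (hZ : ∀ x : L, (∀ y : L, ⁅x, y⁆ = 0) → x = 0) :
    (∀ a : L, (∀ b ∈ I, ⁅a, b⁆ = 0) → a = 0) ∧
      (∀ x : L, (∀ y : L, ⁅x, ⁅x, y⁆⁆ = 0) → x = 0) :=
  stmt_8_general I hess hI
end

section
/- Let A be a semiprime associative algebra (2-torsion free) and a ∈ A such that [[a,x],y] = 0 for all x, y ∈ A. Then a lies in the center of A. -/
/-!
Write `d z = a * z - z * a`; it is a derivation, and the hypothesis says that every `d x` is
central, so in particular `d (d x) = 0`. Applying `d` twice to a product gives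
`d² (x y) = d² x · y + 2 d x · d y + x · d² y`, hence `2 d x · d y = 0` and, dividing by 2,
`d x · d y = 0`. Writing `d x · u · d y = d x · d (u y) - d x · d u · y` then shows
`c A c = 0` and `c c = 0` for `c = d x`, so the ideal generated by `c` squares to zero and
semiprimeness gives `c = 0`.
-/

def IsSemiprimeRing (A : Type*) [NonUnitalRing A] : Prop :=
  ∀ I : TwoSidedIdeal A, (∀ x ∈ I, ∀ y ∈ I, x * y = 0) → I = ⊥

namespace TwoSidedIdeal

variable {A : Type*} [NonUnitalRing A] {c : A}

theorem mul_eq_zero_and_mul_mul_eq_zero_of_mem_span_singleton (hcc : c * c = 0)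
    (hcuc : ∀ u, c * u * c = 0) {x : A} (hx : x ∈ span {c}) :
    x * c = 0 ∧ ∀ r, x * r * c = 0 := by
  induction hx using span_induction with
  | mem x hx =>
    rw [Set.mem_singleton_iff.mp hx]
    exact ⟨hcc, hcuc⟩
  | zero => simp
  | add x y _ _ hx hy => simp [add_mul, hx.1, hy.1, hx.2, hy.2]
  | neg x _ hx => simp [hx.1, hx.2]
  | left_absorb s x _ hx => simp [mul_assoc s, hx.1, hx.2]
  | right_absorb b x _ hx => exact ⟨hx.2 b, fun r => by rw [mul_assoc x, hx.2]⟩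

theorem mul_eq_zero_of_mem_span_singleton (hcc : c * c = 0) (hcuc : ∀ u, c * u * c = 0)
    {x y : A} (hx : x ∈ span {c}) (hy : y ∈ span {c}) : x * y = 0 := by
  induction hy using span_induction generalizing x with
  | mem y hy =>
    rw [Set.mem_singleton_iff.mp hy]
    exact (mul_eq_zero_and_mul_mul_eq_zero_of_mem_span_singleton hcc hcuc hx).1
  | zero => simp
  | add y z _ _ hy hz => rw [mul_add, hy hx, hz hx, add_zero]
  | neg y _ hy => rw [mul_neg, hy hx, neg_zero]
  | left_absorb s y _ hy => rw [← mul_assoc, hy (mul_mem_right _ _ _ hx)]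
  | right_absorb b y _ hy => rw [← mul_assoc, hy hx, zero_mul]

end TwoSidedIdeal

theorem IsSemiprimeRing.eq_zero_of_forall_mul_mul_eq_zero {A : Type*} [NonUnitalRing A]
    (hA : IsSemiprimeRing A) {c : A} (hcc : c * c = 0) (hcuc : ∀ u, c * u * c = 0) : c = 0 := by
  have hspan : TwoSidedIdeal.span {c} = ⊥ := hA _ fun _ hx _ hy =>
    TwoSidedIdeal.mul_eq_zero_of_mem_span_singleton hcc hcuc hx hy
  rw [← TwoSidedIdeal.mem_bot, ← hspan]
  exact TwoSidedIdeal.subset_span rfl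

section CentralCommutators

variable {A : Type*} [NonUnitalRing A]

theorem commutator_mul_commutator_add_self (a x y : A) :
    (a * x - x * a) * (a * y - y * a) + (a * x - x * a) * (a * y - y * a) =
      (a * (a * (x * y) - x * y * a) - (a * (x * y) - x * y * a) * a) -
        ((a * (a * x - x * a) - (a * x - x * a) * a) * y +
          x * (a * (a * y - y * a) - (a * y - y * a) * a)) := by
  noncomm_ring

variable (htf : ∀ x : A, x + x = 0 → x = 0) {a : A}
  (h : ∀ x y : A, (a * x - x * a) * y - y * (a * x - x * a) = 0)
include htf h

theorem commutator_mul_commutator_eq_zero (x y : A) :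
    (a * x - x * a) * (a * y - y * a) = 0 := by
  have hdd : ∀ z : A, a * (a * z - z * a) - (a * z - z * a) * a = 0 := fun z => by
    rw [← neg_sub, h z a, neg_zero]
  apply htf
  rw [commutator_mul_commutator_add_self, hdd, hdd, hdd, zero_mul, mul_zero, add_zero, sub_zero]

theorem commutator_mul_mul_commutator_eq_zero (x u y : A) :
    (a * x - x * a) * u * (a * y - y * a) = 0 := by
  have key : (a * x - x * a) * u * (a * y - y * a) =
      (a * x - x * a) * (a * (u * y) - u * y * a) - (a * x - x * a) * (a * u - u * a) * y := by
    noncomm_ring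
  rw [key, commutator_mul_commutator_eq_zero htf h, commutator_mul_commutator_eq_zero htf h,
    zero_mul, sub_zero]

end CentralCommutators

/-- Herstein's sublemma, fact (†): in a semiprime 2-torsion free
associative algebra, `[[a,x],y] = 0` for all `x, y` forces `a` to be central. -/
theorem stmt_9 {A : Type*} [NonUnitalRing A]
    (hsemi : ∀ I : TwoSidedIdeal A, (∀ x ∈ I, ∀ y ∈ I, x * y = 0) → I = ⊥)
    (htf : ∀ x : A, x + x = 0 → x = 0)
    (a : A) (h : ∀ x y : A, (a * x - x * a) * y - y * (a * x - x * a) = 0) :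
    ∀ x : A, a * x = x * a := by
  intro x
  have hA : IsSemiprimeRing A := hsemi
  exact sub_eq_zero.mp <| hA.eq_zero_of_forall_mul_mul_eq_zero
    (commutator_mul_commutator_eq_zero htf h x x)
    (fun u => commutator_mul_mul_commutator_eq_zero htf h x u x)
end

section
/- Let A be a semiprime non-commutative associative algebra. Then the map Inn(A) → Der(A)/I_Z sending ad a to the class of ad a is an injective Lie algebra homomorphism whose image is an essential ideal of Der(A)/I_Z. -/
attribute [local instance 100] LieRing.ofAssociativeRing

/-- The Lie algebra `Der(A)` of associative derivations of `A`, as a Lie subalgebra of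
`Module.End R A`. -/
def DerLie (R A : Type*) [CommRing R] [Ring A] [Algebra R A] :
    LieSubalgebra R (Module.End R A) where
  carrier := {δ | ∀ a b : A, δ (a * b) = δ a * b + a * δ b}
  add_mem' := by
    intro δ μ hδ hμ a b
    rw [LinearMap.add_apply, LinearMap.add_apply, LinearMap.add_apply, hδ a b, hμ a b,
      add_mul, mul_add]
    abel
  zero_mem' := by intro a b; simp
  smul_mem' := by
    intro c δ hδ a b
    rw [LinearMap.smul_apply, LinearMap.smul_apply, LinearMap.smul_apply, hδ a b, smul_add,
      smul_mul_assoc, mul_smul_comm]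
  lie_mem' := by
    intro δ μ hδ hμ a b
    have hδ' : ∀ a b : A, δ (a * b) = δ a * b + a * δ b := hδ
    have hμ' : ∀ a b : A, μ (a * b) = μ a * b + a * μ b := hμ
    rw [Ring.lie_def]
    simp only [LinearMap.sub_apply, Module.End.mul_apply, hδ', hμ', map_add,
      add_mul, mul_add, sub_mul, mul_sub]
    abel

/-- The inner derivation `ad a`, as an element of `DerLie R A`. -/
def adDer {R A : Type*} [CommRing R] [Ring A] [Algebra R A] (a : A) : DerLie R A :=
  ⟨LieAlgebra.ad R A a, by
    intro x y
    simp only [LieAlgebra.ad_apply, Ring.lie_def]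
    noncomm_ring⟩

/-!
A derivation `δ` lies in `I_Z` exactly when `⁅δ, ad a⁆ = ad (δ a)` lies in `I_Z` for all `a`,
so everything reduces to one fact about semiprime rings: if every commutator `[c, x]` is
central, then `c` is central. Indeed `z = [c, x]` and `[c, x c] = z c` are central, so
`z² = z (c x) - z (x c) = x (z c) - x (z c) = 0`, and a central square-zero element generates
a square-zero ideal. Hence `ad a ∈ I_Z` forces `ad a = 0`, which gives injectivity; and for
`δ ∉ I_Z` some `δ a` is not central, so the class of `⁅δ, ad a⁆ = ad (δ a)` is a nonzero
element of the image of `Inn(A)` in every ideal containing the class of `δ`.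
-/

section Semiprime

variable {A : Type*} [Ring A]

theorem eq_zero_of_central_of_mul_self_eq_zero
    (hsemi : ∀ I : TwoSidedIdeal A, (∀ x ∈ I, ∀ y ∈ I, x * y = 0) → I = ⊥)
    {z : A} (hz : ∀ x, z * x = x * z) (hz2 : z * z = 0) : z = 0 := by
  set I : TwoSidedIdeal A := TwoSidedIdeal.mk' {x | ∃ u, x = z * u}
    ⟨0, (mul_zero z).symm⟩
    (by rintro _ _ ⟨u, rfl⟩ ⟨v, rfl⟩; exact ⟨u + v, (mul_add z u v).symm⟩)
    (by rintro _ ⟨u, rfl⟩; exact ⟨-u, (mul_neg z u).symm⟩)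
    (by rintro x _ ⟨u, rfl⟩; exact ⟨x * u, by rw [← mul_assoc, ← hz x, mul_assoc]⟩)
    (by rintro _ y ⟨u, rfl⟩; exact ⟨u * y, mul_assoc z u y⟩) with hIdef
  have hI : I = ⊥ := by
    refine hsemi I ?_
    simp only [hIdef, TwoSidedIdeal.mem_mk']
    rintro _ ⟨u, rfl⟩ _ ⟨v, rfl⟩
    calc z * u * (z * v) = z * (u * z) * v := by noncomm_ring
    _ = z * (z * u) * v := by rw [hz u]
    _ = 0 := by rw [← mul_assoc, hz2, zero_mul, zero_mul]
  have hzI : z ∈ I := (TwoSidedIdeal.mem_mk' ..).2 ⟨1, (mul_one z).symm⟩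
  rwa [hI, TwoSidedIdeal.mem_bot] at hzI

theorem central_of_forall_commutator_central
    (hsemi : ∀ I : TwoSidedIdeal A, (∀ x ∈ I, ∀ y ∈ I, x * y = 0) → I = ⊥)
    {c : A} (hc : ∀ x y : A, (c * x - x * c) * y = y * (c * x - x * c)) (x : A) :
    c * x = x * c := by
  set z := c * x - x * c with hzdef
  have hzc : ∀ y, z * c * y = y * (z * c) := by
    have e : c * (x * c) - x * c * c = z * c := by rw [hzdef]; noncomm_ring
    simpa only [e] using hc (x * c)
  have hz2 : z * z = 0 := by
    calc z * z = z * (c * x) - z * (x * c) := by rw [hzdef, mul_sub]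
    _ = x * (z * c) - x * (z * c) := by rw [← mul_assoc, hzc x, ← mul_assoc z x, hc x x, mul_assoc]
    _ = 0 := sub_self _
  exact sub_eq_zero.1 (eq_zero_of_central_of_mul_self_eq_zero hsemi (hc x) hz2)

end Semiprime

section InnerDerivations

variable {R A : Type*} [CommRing R] [Ring A] [Algebra R A]

variable (R A) in
def adDerHom : A →ₗ⁅R⁆ DerLie R A where
  toFun := adDer
  map_add' a b := Subtype.ext (map_add (LieAlgebra.ad R A) a b)
  map_smul' r a := Subtype.ext (map_smul (LieAlgebra.ad R A) r a)
  map_lie' {a b} := Subtype.ext (LieHom.map_lie (LieAlgebra.ad R A) a b)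

theorem lie_adDer (δ : DerLie R A) (a : A) :
    ⁅δ, adDer (R := R) a⁆ = adDer ((δ : Module.End R A) a) := by
  have hδ : ∀ u v : A, (δ : Module.End R A) (u * v)
      = (δ : Module.End R A) u * v + u * (δ : Module.End R A) v := δ.2
  ext x
  simp only [LieSubalgebra.coe_bracket, Ring.lie_def, LinearMap.sub_apply, Module.End.mul_apply,
    adDer, LieAlgebra.ad_apply, map_sub, hδ]
  abel

variable (IZ : LieIdeal R (DerLie R A))

/-- `a ↦ ad a + I_Z`, i.e. the map `Inn(A) → Der(A)/I_Z` precomposed with `a ↦ ad a`. -/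
def adQuot : A →ₗ⁅R⁆ DerLie R A ⧸ IZ :=
  { (LieSubmodule.Quotient.mk' (IZ : LieSubmodule R (DerLie R A) (DerLie R A))).toLinearMap.comp
      (adDerHom R A).toLinearMap with
    map_lie' := fun {a b} => by
      change LieSubmodule.Quotient.mk (adDerHom R A ⁅a, b⁆) = _
      rw [LieHom.map_lie, LieSubmodule.Quotient.mk_bracket]
      rfl }

@[simp]
theorem adQuot_apply (a : A) :
    adQuot IZ a = LieSubmodule.Quotient.mk (N := (IZ : LieSubmodule R (DerLie R A) (DerLie R A)))
      (adDer a) := rfl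

theorem lie_mk_adQuot (δ : DerLie R A) (a : A) :
    ⁅LieSubmodule.Quotient.mk (N := (IZ : LieSubmodule R (DerLie R A) (DerLie R A))) δ,
      adQuot IZ a⁆ = adQuot IZ ((δ : Module.End R A) a) := by
  rw [adQuot_apply, adQuot_apply, ← lie_adDer]
  rfl

theorem adQuot_isIdealMorphism : (adQuot IZ).IsIdealMorphism := by
  rw [LieHom.isIdealMorphism_iff]
  intro q a
  obtain ⟨δ, rfl⟩ := LieSubmodule.Quotient.surjective_mk' _ q
  exact ⟨(δ : Module.End R A) a, lie_mk_adQuot IZ δ a⟩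

variable {IZ}
variable (hsemi : ∀ I : TwoSidedIdeal A, (∀ x ∈ I, ∀ y ∈ I, x * y = 0) → I = ⊥)
  (hIZ : ∀ δ : DerLie R A,
    δ ∈ IZ ↔ ∀ a x : A, (δ : Module.End R A) a * x = x * (δ : Module.End R A) a)
include hsemi hIZ

theorem central_of_adQuot_eq_zero {c : A} (hc : adQuot IZ c = 0) (x : A) : c * x = x * c := by
  refine central_of_forall_commutator_central hsemi (fun y z => ?_) x
  simpa only [adDer, LieAlgebra.ad_apply, Ring.lie_def] using
    (hIZ (adDer c)).1 (LieSubmodule.Quotient.mk_eq_zero'.1 hc) y z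

theorem ad_eq_of_adQuot_eq {a b : A} (h : adQuot IZ a = adQuot IZ b) :
    LieAlgebra.ad R A a = LieAlgebra.ad R A b := by
  have hab := central_of_adQuot_eq_zero (c := a - b) hsemi hIZ (by rw [map_sub, h, sub_self])
  ext x
  rw [LieAlgebra.ad_apply, LieAlgebra.ad_apply, Ring.lie_def, Ring.lie_def, ← sub_eq_zero,
    ← sub_eq_zero.2 (hab x)]
  noncomm_ring

theorem idealRange_adQuot_inf_ne_bot {J : LieIdeal R (DerLie R A ⧸ IZ)} (hJ : J ≠ ⊥) :
    (adQuot IZ).idealRange ⊓ J ≠ ⊥ := by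
  obtain ⟨q, hqJ, hq⟩ : ∃ q ∈ J, q ≠ 0 := by
    by_contra! h
    exact hJ ((LieSubmodule.eq_bot_iff J).2 h)
  obtain ⟨δ, rfl⟩ := LieSubmodule.Quotient.surjective_mk' _ q
  have hδ : δ ∉ IZ := fun h => hq (LieSubmodule.Quotient.mk_eq_zero'.2 h)
  obtain ⟨a, x, hax⟩ : ∃ a x : A, (δ : Module.End R A) a * x ≠ x * (δ : Module.End R A) a := by
    simpa [hIZ] using hδ
  have hmemJ : adQuot IZ ((δ : Module.End R A) a) ∈ J := by
    rw [← lie_mk_adQuot]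
    exact lie_mem_left R _ J _ _ hqJ
  intro hbot
  refine hax (central_of_adQuot_eq_zero hsemi hIZ ?_ x)
  exact (LieSubmodule.eq_bot_iff _).1 hbot _ ⟨(adQuot IZ).mem_idealRange _, hmemJ⟩

end InnerDerivations

theorem stmt_10_general {R A : Type*} [CommRing R]
    [Ring A] [Algebra R A]
    (hsemi : ∀ I : TwoSidedIdeal A, (∀ x ∈ I, ∀ y ∈ I, x * y = 0) → I = ⊥)
    (IZ : LieIdeal R (DerLie R A))
    (hIZ : ∀ δ : DerLie R A,
      δ ∈ IZ ↔ ∀ a x : A, (δ : Module.End R A) a * x = x * (δ : Module.End R A) a) :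
    -- the map `Inn(A) → Der(A)/I_Z`, `ad a ↦ class of ad a`
    (∀ a b : A,
        (LieSubmodule.Quotient.mk (N := (IZ : LieSubmodule R (DerLie R A) (DerLie R A))) (adDer a)
          = LieSubmodule.Quotient.mk (N := (IZ : LieSubmodule R (DerLie R A) (DerLie R A))) (adDer b))
        → LieAlgebra.ad R A a = LieAlgebra.ad R A b) ∧
    -- it is a homomorphism of Lie algebras
    (∀ a b : A,
        LieSubmodule.Quotient.mk (N := (IZ : LieSubmodule R (DerLie R A) (DerLie R A))) (adDer ⁅a, b⁆)
          = ⁅LieSubmodule.Quotient.mk (N := (IZ : LieSubmodule R (DerLie R A) (DerLie R A))) (adDer a),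
             LieSubmodule.Quotient.mk (N := (IZ : LieSubmodule R (DerLie R A) (DerLie R A))) (adDer b)⁆) ∧
    -- its image is an essential ideal of `Der(A)/I_Z`
    (∃ J : LieIdeal R (DerLie R A ⧸ IZ),
      (∀ x : DerLie R A ⧸ IZ, x ∈ J ↔ ∃ a : A,
          LieSubmodule.Quotient.mk (N := (IZ : LieSubmodule R (DerLie R A) (DerLie R A))) (adDer a) = x) ∧
      ∀ J' : LieIdeal R (DerLie R A ⧸ IZ), J' ≠ ⊥ → J ⊓ J' ≠ ⊥) :=
  ⟨fun _ _ => ad_eq_of_adQuot_eq hsemi hIZ,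
    fun a b => (adQuot IZ).map_lie a b,
    ⟨(adQuot IZ).idealRange, fun _ => (adQuot IZ).mem_idealRange_iff (adQuot_isIdealMorphism IZ),
      fun _ => idealRange_adQuot_inf_ne_bot hsemi hIZ⟩⟩

/-- for a semiprime non-commutative algebra `A`, the map
`ad a ↦ (ad a) + I_Z` is an injective Lie algebra homomorphism from `Inn(A)` into
`Der(A)/I_Z`, whose image is an essential ideal of `Der(A)/I_Z`. -/
theorem stmt_10 {R A : Type*} [CommRing R] [Invertible (2 : R)] [Invertible (3 : R)]
    [Ring A] [Algebra R A]
    (hsemi : ∀ I : TwoSidedIdeal A, (∀ x ∈ I, ∀ y ∈ I, x * y = 0) → I = ⊥)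
    (hnc : ∃ a b : A, a * b ≠ b * a)
    (IZ : LieIdeal R (DerLie R A))
    (hIZ : ∀ δ : DerLie R A,
      δ ∈ IZ ↔ ∀ a x : A, (δ : Module.End R A) a * x = x * (δ : Module.End R A) a) :
    -- the map `Inn(A) → Der(A)/I_Z`, `ad a ↦ class of ad a`
    (∀ a b : A,
        (LieSubmodule.Quotient.mk (N := (IZ : LieSubmodule R (DerLie R A) (DerLie R A))) (adDer a)
          = LieSubmodule.Quotient.mk (N := (IZ : LieSubmodule R (DerLie R A) (DerLie R A))) (adDer b))
        → LieAlgebra.ad R A a = LieAlgebra.ad R A b) ∧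
    -- it is a homomorphism of Lie algebras
    (∀ a b : A,
        LieSubmodule.Quotient.mk (N := (IZ : LieSubmodule R (DerLie R A) (DerLie R A))) (adDer ⁅a, b⁆)
          = ⁅LieSubmodule.Quotient.mk (N := (IZ : LieSubmodule R (DerLie R A) (DerLie R A))) (adDer a),
             LieSubmodule.Quotient.mk (N := (IZ : LieSubmodule R (DerLie R A) (DerLie R A))) (adDer b)⁆) ∧
    -- its image is an essential ideal of `Der(A)/I_Z`
    (∃ J : LieIdeal R (DerLie R A ⧸ IZ),
      (∀ x : DerLie R A ⧸ IZ, x ∈ J ↔ ∃ a : A,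
          LieSubmodule.Quotient.mk (N := (IZ : LieSubmodule R (DerLie R A) (DerLie R A))) (adDer a) = x) ∧
      ∀ J' : LieIdeal R (DerLie R A ⧸ IZ), J' ≠ ⊥ → J ⊓ J' ≠ ⊥) :=
  stmt_10_general hsemi IZ hIZ
end

section
/- Let A be a semiprime associative algebra and δ ∈ Der(A) with δ(A) ⊆ Z(A), and let d ∈ Der(A) be any derivation. Then the commutator μ = [δ, d] = δ∘d − d∘δ annihilates all commutators: μ([a,b]) = 0 for all a, b ∈ A. -/
section Leibniz

variable {F A : Type*} [Ring A] [FunLike F A A] [AddMonoidHomClass F A A]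

theorem map_commutator_eq_zero_of_leibniz_of_central (δ : F)
    (hδ : ∀ a b : A, δ (a * b) = δ a * b + a * δ b) (hδZ : ∀ a x : A, δ a * x = x * δ a)
    (a b : A) : δ (a * b - b * a) = 0 := by
  rw [map_sub, hδ a b, hδ b a, hδZ a b, hδZ b a]
  abel

theorem map_commutator_of_leibniz (d : F) (hd : ∀ a b : A, d (a * b) = d a * b + a * d b)
    (a b : A) : d (a * b - b * a) = (d a * b - b * d a) + (a * d b - d b * a) := by
  rw [map_sub, hd, hd]
  abel

end Leibniz

theorem stmt_11_general {R A : Type*} [CommRing R] [Ring A] [Algebra R A]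
    (δ d : Module.End R A)
    (hδ : ∀ a b : A, δ (a * b) = δ a * b + a * δ b)
    (hd : ∀ a b : A, d (a * b) = d a * b + a * d b)
    (hδZ : ∀ a x : A, δ a * x = x * δ a) :
    ∀ a b : A, δ (d (a * b - b * a)) - d (δ (a * b - b * a)) = 0 := by
  have hδ_comm := map_commutator_eq_zero_of_leibniz_of_central δ hδ hδZ
  intro a b
  rw [hδ_comm, map_zero, sub_zero, map_commutator_of_leibniz d hd, map_add, hδ_comm, hδ_comm,
    add_zero]

/-- if `A` is semiprime, `δ` is a derivation with `δ(A) ⊆ Z(A)` and `d`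
is any derivation, then `μ = [δ,d]` kills all commutators. -/
theorem stmt_11 {R A : Type*} [CommRing R] [Ring A] [Algebra R A]
    (hsemi : ∀ I : TwoSidedIdeal A, (∀ x ∈ I, ∀ y ∈ I, x * y = 0) → I = ⊥)
    (δ d : Module.End R A)
    (hδ : ∀ a b : A, δ (a * b) = δ a * b + a * δ b)
    (hd : ∀ a b : A, d (a * b) = d a * b + a * d b)
    (hδZ : ∀ a x : A, δ a * x = x * δ a) :
    ∀ a b : A, δ (d (a * b - b * a)) - d (δ (a * b - b * a)) = 0 :=
  stmt_11_general δ d hδ hd hδZ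
end

section
/- Let A be a semiprime non-commutative associative algebra whose center Z(A) contains no nonzero associative ideal of A. Then every derivation δ of A with δ(A) ⊆ Z(A) is zero, i.e., I_Z = 0. -/
/-!
For `x` fixed, `δ x` is central, so differentiating `xy · x = x · xy` gives `δ x · [y, x] = 0`,
and hence `δ x · A · [z, x] = 0`. Linearizing in `x` shows that `u = δ x · [z, w]` satisfies
`u A u = 0`, so `u = 0` by semiprimeness. Thus `δ x` is a central element annihilating every
commutator, so `δ x · A` is an ideal contained in the center, and `δ x = 0`.
-/

section Semiprime

variable {A : Type*} [Ring A]

theorem eq_zero_of_forall_mul_mul_self_eq_zero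
    (hsemi : ∀ I : TwoSidedIdeal A, (∀ x ∈ I, ∀ y ∈ I, x * y = 0) → I = ⊥)
    {u : A} (hu : ∀ t : A, u * t * u = 0) : u = 0 := by
  have hright : ∀ x ∈ TwoSidedIdeal.span {u}, ∀ t, u * t * x = 0 := by
    intro x hx
    induction hx using TwoSidedIdeal.span_induction with
    | mem x hx => rw [Set.mem_singleton_iff.mp hx]; exact hu
    | zero => simp
    | add x y _ _ hx hy => intro t; rw [mul_add, hx, hy, add_zero]
    | neg x _ hx => intro t; rw [mul_neg, hx, neg_zero]
    | left_absorb a x _ hx => intro t; rw [← mul_assoc, mul_assoc u, hx]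
    | right_absorb b x _ hx => intro t; rw [← mul_assoc, hx, zero_mul]
  have hspan : ∀ y ∈ TwoSidedIdeal.span {u}, ∀ x ∈ TwoSidedIdeal.span {u}, ∀ t,
      y * t * x = 0 := by
    intro y hy
    induction hy using TwoSidedIdeal.span_induction with
    | mem y hy => rw [Set.mem_singleton_iff.mp hy]; exact hright
    | zero => simp
    | add y z _ _ hy hz => intro x hx t; rw [add_mul, add_mul, hy x hx, hz x hx, add_zero]
    | neg y _ hy => intro x hx t; rw [neg_mul, neg_mul, hy x hx, neg_zero]
    | left_absorb a y _ hy => intro x hx t; rw [mul_assoc a, mul_assoc a, hy x hx, mul_zero]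
    | right_absorb b y _ hy => intro x hx t; rw [mul_assoc y, hy x hx]
  have hbot := hsemi _ fun x hx y hy => by simpa using hspan x hx y hy 1
  simpa [hbot] using TwoSidedIdeal.subset_span (Set.mem_singleton u)

theorem eq_zero_of_commute_of_mul_commutator_eq_zero
    (hZ : ∀ I : TwoSidedIdeal A, (∀ x ∈ I, ∀ y : A, x * y = y * x) → I = ⊥)
    {v : A} (hv : ∀ y : A, v * y = y * v) (hvc : ∀ y z : A, v * (y * z - z * y) = 0) :
    v = 0 := by
  let I : TwoSidedIdeal A := .mk' (Set.range (v * ·)) ⟨0, mul_zero v⟩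
    (by rintro _ _ ⟨a, rfl⟩ ⟨b, rfl⟩; exact ⟨a + b, mul_add v a b⟩)
    (by rintro _ ⟨a, rfl⟩; exact ⟨-a, mul_neg v a⟩)
    (by rintro r _ ⟨a, rfl⟩
        exact ⟨r * a, by dsimp only; rw [← mul_assoc, hv, mul_assoc]⟩)
    (by rintro _ r ⟨a, rfl⟩; exact ⟨a * r, (mul_assoc v a r).symm⟩)
  have hbot : I = ⊥ := hZ I <| by
    intro x hx y
    obtain ⟨a, rfl⟩ := (TwoSidedIdeal.mem_mk' ..).mp hx
    have := hvc a y
    rw [mul_sub, sub_eq_zero] at this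
    rw [mul_assoc, this, ← mul_assoc, hv, mul_assoc]
  have hvI : v ∈ I := (TwoSidedIdeal.mem_mk' ..).mpr ⟨1, mul_one v⟩
  simpa [hbot] using hvI

end Semiprime

section CentralValued

variable {A : Type*} [Ring A] {δ : A →+ A}

theorem map_mul_commutator_self_eq_zero (hδ : ∀ a b : A, δ (a * b) = δ a * b + a * δ b)
    (hδZ : ∀ a x : A, δ a * x = x * δ a) (x y : A) : δ x * (y * x - x * y) = 0 := by
  have h := hδZ (x * y) x
  rw [hδ] at h
  linear_combination (norm := noncomm_ring) h - x * hδZ y x - hδZ x x * y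

theorem map_mul_mul_commutator_self_eq_zero (hδ : ∀ a b : A, δ (a * b) = δ a * b + a * δ b)
    (hδZ : ∀ a x : A, δ a * x = x * δ a) (x y z : A) : δ x * y * (z * x - x * z) = 0 := by
  linear_combination (norm := noncomm_ring)
    map_mul_commutator_self_eq_zero hδ hδZ x (y * z)
      - map_mul_commutator_self_eq_zero hδ hδZ x y * z

theorem map_mul_mul_commutator_add_eq_zero (hδ : ∀ a b : A, δ (a * b) = δ a * b + a * δ b)
    (hδZ : ∀ a x : A, δ a * x = x * δ a) (x w y z : A) :
    δ x * y * (z * w - w * z) + δ w * y * (z * x - x * z) = 0 := by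
  have h := map_mul_mul_commutator_self_eq_zero hδ hδZ (x + w) y z
  rw [map_add] at h
  linear_combination (norm := noncomm_ring)
    h - map_mul_mul_commutator_self_eq_zero hδ hδZ x y z
      - map_mul_mul_commutator_self_eq_zero hδ hδZ w y z

theorem map_mul_commutator_mul_mul_self_eq_zero
    (hδ : ∀ a b : A, δ (a * b) = δ a * b + a * δ b)
    (hδZ : ∀ a x : A, δ a * x = x * δ a) (x z w t : A) :
    δ x * (z * w - w * z) * t * (δ x * (z * w - w * z)) = 0 := by
  have h := map_mul_mul_commutator_add_eq_zero hδ hδZ x w ((z * w - w * z) * t) z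
  linear_combination (norm := noncomm_ring)
    -(δ x) * hδZ x ((z * w - w * z) * t) * (z * w - w * z) + δ x * h
    + hδZ w (δ x) * ((z * w - w * z) * t * (z * x - x * z))
    - δ w * map_mul_mul_commutator_self_eq_zero hδ hδZ x ((z * w - w * z) * t) z

theorem map_mul_commutator_eq_zero
    (hsemi : ∀ I : TwoSidedIdeal A, (∀ x ∈ I, ∀ y ∈ I, x * y = 0) → I = ⊥)
    (hδ : ∀ a b : A, δ (a * b) = δ a * b + a * δ b) (hδZ : ∀ a x : A, δ a * x = x * δ a)
    (x z w : A) : δ x * (z * w - w * z) = 0 :=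
  eq_zero_of_forall_mul_mul_self_eq_zero hsemi
    (map_mul_commutator_mul_mul_self_eq_zero hδ hδZ x z w)

theorem eq_zero_of_derivation_into_center
    (hsemi : ∀ I : TwoSidedIdeal A, (∀ x ∈ I, ∀ y ∈ I, x * y = 0) → I = ⊥)
    (hZ : ∀ I : TwoSidedIdeal A, (∀ x ∈ I, ∀ y : A, x * y = y * x) → I = ⊥)
    (hδ : ∀ a b : A, δ (a * b) = δ a * b + a * δ b)
    (hδZ : ∀ a x : A, δ a * x = x * δ a) :
    δ = 0 :=
  AddMonoidHom.ext fun x =>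
    eq_zero_of_commute_of_mul_commutator_eq_zero hZ (hδZ x)
      (map_mul_commutator_eq_zero hsemi hδ hδZ x)

end CentralValued

theorem stmt_12_general {R A : Type*} [CommRing R]
    [Ring A] [Algebra R A]
    (hsemi : ∀ I : TwoSidedIdeal A, (∀ x ∈ I, ∀ y ∈ I, x * y = 0) → I = ⊥)
    (hZ : ∀ I : TwoSidedIdeal A, (∀ x ∈ I, ∀ y : A, x * y = y * x) → I = ⊥)
    (δ : Module.End R A)
    (hδ : ∀ a b : A, δ (a * b) = δ a * b + a * δ b)
    (hδZ : ∀ a x : A, δ a * x = x * δ a) :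
    δ = 0 :=
  LinearMap.toAddMonoidHom_injective <|
    eq_zero_of_derivation_into_center (δ := δ.toAddMonoidHom) hsemi hZ hδ hδZ

/-- if `A` is semiprime, non-commutative, and the center contains no
nonzero associative ideal, then every derivation mapping `A` into the center is zero. -/
theorem stmt_12 {R A : Type*} [CommRing R] [Invertible (2 : R)] [Invertible (3 : R)]
    [Ring A] [Algebra R A]
    (hsemi : ∀ I : TwoSidedIdeal A, (∀ x ∈ I, ∀ y ∈ I, x * y = 0) → I = ⊥)
    (hnc : ∃ a b : A, a * b ≠ b * a)
    (hZ : ∀ I : TwoSidedIdeal A, (∀ x ∈ I, ∀ y : A, x * y = y * x) → I = ⊥)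
    (δ : Module.End R A)
    (hδ : ∀ a b : A, δ (a * b) = δ a * b + a * δ b)
    (hδZ : ∀ a x : A, δ a * x = x * δ a) :
    δ = 0 :=
  stmt_12_general hsemi hZ δ hδ hδZ
end

section
/- Let A be a prime non-commutative associative algebra over a ring in which 2 and 3 are invertible. Then the Lie algebra Der(A) of derivations of A is strongly non-degenerate: if δ ∈ Der(A) satisfies [δ,[δ,μ]] = 0 for all μ ∈ Der(A), then δ = 0. -/
/-!
Since `[δ, [δ, ad a]] = ad (δ² a)`, the hypothesis says that `δ²` takes central values.
If `δ² = 0`, the Leibniz rule gives `2 δx δy = 0`, hence `δx A δx = 0` and `δ = 0` by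
primeness. Otherwise some `δ² y` is a nonzero central element, hence not a zero divisor, and
this forces `ker δ` into the centre. As `δ [δx, x] = [δ²x, x] = 0`, every `[δx, x]` is central,
and a short computation using 2-torsion-freeness shows that `δ` is commuting: `[δx, x] = 0`.
By Posner's theorem a commuting derivation of a noncommutative prime ring vanishes.
-/

attribute [local instance 100] LieRing.ofAssociativeRing

def IsPrimeRing (A : Type*) [Ring A] : Prop :=
  ∀ I J : TwoSidedIdeal A, (∀ x ∈ I, ∀ y ∈ J, x * y = 0) → I = ⊥ ∨ J = ⊥

namespace IsPrimeRing

variable {A : Type*} [Ring A]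

theorem eq_zero_or_eq_zero_of_mul_mul_eq_zero (hA : IsPrimeRing A) {x y : A}
    (h : ∀ c, x * c * y = 0) : x = 0 ∨ y = 0 := by
  -- `I = {r | r A y = 0}` and `J = {s | I s = 0}` are two-sided ideals with `I J = 0`,
  -- `x ∈ I` and `y ∈ J`.
  let I : TwoSidedIdeal A := .mk' {r | ∀ c, r * c * y = 0}
    (by intro c; simp)
    (fun {r s} hr hs c => by rw [add_mul, add_mul, hr c, hs c, add_zero])
    (fun {r} hr c => by rw [neg_mul, neg_mul, hr c, neg_zero])
    (fun {p q} hq c => by rw [mul_assoc, mul_assoc, ← mul_assoc q, hq c, mul_zero])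
    (fun {p q} hp c => by rw [mul_assoc p q c]; exact hp (q * c))
  let J : TwoSidedIdeal A := .mk' {s | ∀ r, (∀ c, r * c * y = 0) → r * s = 0}
    (fun r _ => by rw [mul_zero])
    (fun {s t} hs ht r hr => by rw [mul_add, hs r hr, ht r hr, add_zero])
    (fun {s} hs r hr => by rw [mul_neg, hs r hr, neg_zero])
    (fun {p q} hq r hr => by
      rw [← mul_assoc]
      exact hq (r * p) fun c => by rw [mul_assoc r p c]; exact hr (p * c))
    (fun {p q} hp r hr => by rw [← mul_assoc, hp r hr, zero_mul])
  have hx : x ∈ I := by simpa [I] using h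
  have hy : y ∈ J := by simpa [J] using fun r hr => by simpa using hr 1
  refine (hA I J fun r hr s hs => ?_).imp (fun hI => ?_) (fun hJ => ?_)
  · simp only [I, J, TwoSidedIdeal.mem_mk'] at hr hs
    exact hs r hr
  · rwa [hI, TwoSidedIdeal.mem_bot] at hx
  · rwa [hJ, TwoSidedIdeal.mem_bot] at hy

theorem eq_zero_of_mem_center_of_mul_eq_zero (hA : IsPrimeRing A) {z w : A}
    (hz : z ∈ Set.center A) (hz0 : z ≠ 0) (h : z * w = 0) : w = 0 :=
  (hA.eq_zero_or_eq_zero_of_mul_mul_eq_zero fun c => by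
    rw [← Semigroup.mem_center_iff.mp hz c, mul_assoc, h, mul_zero]).resolve_left hz0

end IsPrimeRing

section Derivation

variable {A : Type*} [Ring A] {d : A →+ A}

theorem derivation_sq_mul (hd : ∀ a b, d (a * b) = d a * b + a * d b) (x y : A) :
    d (d (x * y)) = d (d x) * y + 2 • (d x * d y) + x * d (d y) := by
  rw [hd x y, map_add, hd (d x) y, hd x (d y), two_nsmul]
  abel

theorem IsPrimeRing.derivation_eq_zero_of_sq_eq_zero (hA : IsPrimeRing A)
    (h2 : IsSMulRegular A 2) (hd : ∀ a b, d (a * b) = d a * b + a * d b)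
    (hdd : ∀ x, d (d x) = 0) : d = 0 := by
  have hmul : ∀ x y, d x * d y = 0 := fun x y =>
    h2.right_eq_zero_of_smul (by simpa [hdd] using (derivation_sq_mul hd x y).symm)
  have hdcd : ∀ x c, d x * c * d x = 0 := fun x c => by
    have h := hmul x (c * x)
    rw [hd c x] at h
    linear_combination (norm := noncomm_ring) h - hmul x c * x
  ext x
  exact (hA.eq_zero_or_eq_zero_of_mul_mul_eq_zero (hdcd x)).elim id id

theorem IsPrimeRing.mem_center_of_derivation_eq_zero (hA : IsPrimeRing A)
    (hd : ∀ a b, d (a * b) = d a * b + a * d b) (hdd : ∀ x, d (d x) ∈ Set.center A)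
    {y : A} (hy : d (d y) ≠ 0) {u : A} (hu : d u = 0) : u ∈ Set.center A := by
  -- `d² (u y) = u d² y` is central, so `d² y [u, c] = 0`.
  have huy : d (d (u * y)) = u * d (d y) := by simp [derivation_sq_mul hd, hu]
  have hz := Semigroup.mem_center_iff.mp (hdd y)
  have huz := Semigroup.mem_center_iff.mp (huy ▸ hdd (u * y))
  refine Semigroup.mem_center_iff.mpr fun c => (sub_eq_zero.mp ?_).symm
  refine hA.eq_zero_of_mem_center_of_mul_eq_zero (hdd y) hy ?_
  linear_combination (norm := noncomm_ring) -(hz u) * c - huz c + c * hz u + hz c * u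

theorem IsPrimeRing.commute_derivation_self_of_mem_center (hA : IsPrimeRing A)
    (h2 : IsSMulRegular A 2) (hd : ∀ a b, d (a * b) = d a * b + a * d b)
    (hc : ∀ x, d x * x - x * d x ∈ Set.center A) (x : A) : Commute (d x) x := by
  have hu c := Semigroup.mem_center_iff.mp (hc x) c
  have hx2 c := Semigroup.mem_center_iff.mp (hc (x * x)) c
  have hxx2 c := Semigroup.mem_center_iff.mp (hc (x + x * x)) c
  simp only [map_add, hd x x] at hx2 hxx2
  have hW c : c * (d x * (x * x) - x * x * d x) = (d x * (x * x) - x * x * d x) * c :=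
    sub_eq_zero.mp <| h2.right_eq_zero_of_smul <| by
      linear_combination (norm := noncomm_ring) hxx2 c - hu c - hx2 c
  -- `[d x, x²] = [d x, x] x + x [d x, x] = 2 [d x, x] x`, so `[d x, x] x` is central too.
  have hux c : c * ((d x * x - x * d x) * x) = (d x * x - x * d x) * x * c :=
    sub_eq_zero.mp <| h2.right_eq_zero_of_smul <| by
      linear_combination (norm := noncomm_ring) hW c + hu x * c - c * hu x
  have huu e : (d x * x - x * d x) * e * (d x * x - x * d x) = 0 := by
    linear_combination (norm := noncomm_ring)
      -(hu e) * (d x * x - x * d x) - e * hu (d x) * x + e * hux (d x)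
  exact sub_eq_zero.mp ((hA.eq_zero_or_eq_zero_of_mul_mul_eq_zero huu).elim id id)

theorem derivation_mul_mul_sub_mul_eq_zero_of_commute
    (hd : ∀ a b, d (a * b) = d a * b + a * d b)
    (hc : ∀ x, Commute (d x) x) (x y c : A) : d x * y * (c * x - x * c) = 0 := by
  have hlin y : d x * y + d y * x = x * d y + y * d x := by
    have h := (hc (x + y)).eq
    rw [map_add] at h
    linear_combination (norm := noncomm_ring) h - (hc x).eq - (hc y).eq
  have hcomm y : d x * (y * x) = d x * (x * y) := by
    have h := hlin (x * y)
    rw [hd x y] at h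
    linear_combination (norm := noncomm_ring) h - x * hlin y - 2 * (hc x).eq * y
  linear_combination (norm := noncomm_ring) hcomm (y * c) - hcomm y * c

theorem IsPrimeRing.derivation_eq_zero_of_commute (hA : IsPrimeRing A)
    (hd : ∀ a b, d (a * b) = d a * b + a * d b) (hnc : ∃ a b : A, a * b ≠ b * a)
    (hc : ∀ x, Commute (d x) x) : d = 0 := by
  have hnoncentral x (hx : ∃ c, c * x ≠ x * c) : d x = 0 := by
    obtain ⟨c, hc'⟩ := hx
    exact (hA.eq_zero_or_eq_zero_of_mul_mul_eq_zero
      (derivation_mul_mul_sub_mul_eq_zero_of_commute hd hc x · c)).resolve_right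
      (sub_ne_zero.mpr hc')
  obtain ⟨a, b, hab⟩ := hnc
  have ha : d a = 0 := hnoncentral a ⟨b, hab.symm⟩
  ext x
  by_cases hx : ∃ c, c * x ≠ x * c
  · exact hnoncentral x hx
  · -- a central `x` is the difference of the noncentral elements `x + a` and `a`.
    push Not at hx
    have hxa : d (x + a) = 0 := hnoncentral (x + a) ⟨b, fun h => hab ?_⟩
    · simpa [ha] using hxa
    · simpa [mul_add, add_mul, hx b] using h.symm

theorem IsPrimeRing.derivation_eq_zero_of_sq_mem_center (hA : IsPrimeRing A)
    (h2 : IsSMulRegular A 2) (hd : ∀ a b, d (a * b) = d a * b + a * d b)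
    (hnc : ∃ a b : A, a * b ≠ b * a) (hdd : ∀ x, d (d x) ∈ Set.center A) : d = 0 := by
  by_cases hzero : ∀ y, d (d y) = 0
  · exact hA.derivation_eq_zero_of_sq_eq_zero h2 hd hzero
  obtain ⟨y, hy⟩ := not_forall.mp hzero
  have hker x : d (d x * x - x * d x) = 0 := by
    rw [map_sub, hd, hd, Semigroup.mem_center_iff.mp (hdd x) x]
    abel
  exact hA.derivation_eq_zero_of_commute hd hnc
    (hA.commute_derivation_self_of_mem_center h2 hd fun x =>
      hA.mem_center_of_derivation_eq_zero hd hdd hy (hker x))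

end Derivation

section DerLie

variable {R A : Type*} [CommRing R] [Ring A] [Algebra R A]

theorem adDer_eq_zero_iff {z : A} : adDer (R := R) z = 0 ↔ z ∈ Set.center A := by
  simp [Subtype.ext_iff, LinearMap.ext_iff, adDer, Ring.lie_def, sub_eq_zero,
    Semigroup.mem_center_iff, eq_comm]

end DerLie

theorem stmt_13_general {R A : Type*} [CommRing R] [Invertible (2 : R)]
    [Ring A] [Algebra R A]
    (hprime : ∀ I J : TwoSidedIdeal A, (∀ x ∈ I, ∀ y ∈ J, x * y = 0) → I = ⊥ ∨ J = ⊥)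
    (hnc : ∃ a b : A, a * b ≠ b * a) :
    ∀ δ : DerLie R A, (∀ μ : DerLie R A, ⁅δ, ⁅δ, μ⁆⁆ = 0) → δ = 0 := by
  intro δ h
  have h2 : IsSMulRegular A 2 := fun x y (hxy : 2 • x = 2 • y) => by
    rw [← invOf_smul_smul (2 : R) x, ← invOf_smul_smul (2 : R) y, two_smul, two_smul,
      ← two_nsmul, ← two_nsmul, hxy]
  have hδ := IsPrimeRing.derivation_eq_zero_of_sq_mem_center
    (d := (δ : Module.End R A).toAddMonoidHom) hprime h2 δ.2 hnc fun a =>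
      adDer_eq_zero_iff.mp <| by rw [LinearMap.toAddMonoidHom_coe, ← lie_adDer, ← lie_adDer, h]
  ext x
  exact DFunLike.congr_fun hδ x

/-- if `A` is a prime non-commutative associative algebra (2, 3
invertible in the base ring), then the Lie algebra `Der(A)` of derivations of `A` is
strongly non-degenerate. -/
theorem stmt_13 {R A : Type*} [CommRing R] [Invertible (2 : R)] [Invertible (3 : R)]
    [Ring A] [Algebra R A]
    (hprime : ∀ I J : TwoSidedIdeal A, (∀ x ∈ I, ∀ y ∈ J, x * y = 0) → I = ⊥ ∨ J = ⊥)
    (hnc : ∃ a b : A, a * b ≠ b * a) :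
    ∀ δ : DerLie R A, (∀ μ : DerLie R A, ⁅δ, ⁅δ, μ⁆⁆ = 0) → δ = 0 :=
  stmt_13_general hprime hnc
end

section
/- Let A be a *-semiprime associative algebra with involution, K its set of skew elements, and suppose k ∈ K satisfies (ad k)^3(t) = 0 for all t ∈ K, where 2 and 3 are invertible. If moreover [k,[k,K]] ⊆ Z(A), then (ad k)^2(t) = 0 for all t ∈ K. -/
/-! With `u = [k,t]` and `c = [k,u]` central, `ad k` is a derivation of `A` killing `k` and `c`.
Applying `(ad k)³ = 0` to the skew elements `tkt` and `tku + ukt` gives, after dividing by `3`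
and `6`, `cku + ukc = 0` and `ckc = 0`, and together with `c = ku - uk` these force `c³ = 0`.
In a `*`-semiprime algebra a central `z` with `z* = ±z` and `z² = 0` spans the `*`-ideal `zA` of
square zero, so it vanishes; applied to the self-adjoint `c²` and then to `c`, this gives `c = 0`.
-/

def IsStarSemiprime (A : Type*) [Ring A] [Star A] : Prop :=
  ∀ I : TwoSidedIdeal A, (∀ x ∈ I, star x ∈ I) → (∀ x ∈ I, ∀ y ∈ I, x * y = 0) → I = ⊥

def TwoSidedIdeal.centralSpan {A : Type*} [Ring A] (z : A) (hz : ∀ x, Commute z x) :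
    TwoSidedIdeal A :=
  .mk' (Set.range (z * ·)) ⟨0, mul_zero z⟩
    (by rintro _ _ ⟨a, rfl⟩ ⟨b, rfl⟩; exact ⟨a + b, mul_add z a b⟩)
    (by rintro _ ⟨a, rfl⟩; exact ⟨-a, mul_neg z a⟩)
    (by rintro x _ ⟨a, rfl⟩; exact ⟨x * a, by simp only [← mul_assoc, (hz x).eq]⟩)
    (by rintro _ y ⟨a, rfl⟩; exact ⟨a * y, (mul_assoc z a y).symm⟩)

theorem IsStarSemiprime.eq_zero_of_mul_self_eq_zero {A : Type*} [Ring A] [StarRing A]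
    (hA : IsStarSemiprime A) {z : A} (hz : ∀ x, Commute z x)
    (hstar : star z = z ∨ star z = -z) (hzz : z * z = 0) : z = 0 := by
  let I := TwoSidedIdeal.centralSpan z hz
  have mem : ∀ x, x ∈ I ↔ ∃ a, z * a = x := fun x => TwoSidedIdeal.mem_mk' ..
  have hI : I = ⊥ := by
    refine hA I (fun x hx => ?_) (fun x hx y hy => ?_)
    · obtain ⟨a, rfl⟩ := (mem x).1 hx
      refine (mem _).2 ?_
      rcases hstar with h | h
      · exact ⟨star a, by rw [star_mul, h, (hz _).eq]⟩
      · exact ⟨-star a, by rw [star_mul, h, mul_neg, mul_neg, (hz _).eq]⟩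
    · obtain ⟨a, rfl⟩ := (mem x).1 hx
      obtain ⟨b, rfl⟩ := (mem y).1 hy
      rw [mul_assoc, ← mul_assoc a, ← (hz a).eq, mul_assoc, ← mul_assoc, hzz, zero_mul]
  simpa [hI] using (mem z).2 ⟨1, mul_one z⟩

theorem IsStarSemiprime.eq_zero_of_mul_self_mul_self_eq_zero {A : Type*} [Ring A] [StarRing A]
    (hA : IsStarSemiprime A) {z : A} (hz : ∀ x, Commute z x) (hstar : star z = -z)
    (hzzz : z * z * z = 0) : z = 0 := by
  refine hA.eq_zero_of_mul_self_eq_zero hz (.inr hstar) (hA.eq_zero_of_mul_self_eq_zero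
    (fun x => (hz x).mul_left (hz x)) (.inl ?_) ?_)
  · rw [star_mul, hstar, neg_mul_neg]
  · rw [← mul_assoc, hzzz, zero_mul]

theorem star_mul_mul_of_skew {A : Type*} [Ring A] [StarRing A] {k x y : A} (hk : star k = -k)
    (hx : star x = -x) (hy : star y = -y) : star (x * k * y) = -(y * k * x) := by
  simp only [star_mul, hx, hy, hk, neg_mul, mul_neg, neg_neg, mul_assoc]

theorem star_lie_of_skew {A : Type*} [Ring A] [StarRing A] {x y : A} (hx : star x = -x)
    (hy : star y = -y) : star ⁅x, y⁆ = -⁅x, y⁆ := by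
  simp only [Ring.lie_def, star_sub, star_mul, hx, hy, neg_mul_neg, neg_sub]

theorem lie_lie_lie_mul_mul {A : Type*} [Ring A] (k x y : A) :
    ⁅k, ⁅k, ⁅k, x * k * y⁆⁆⁆ = ⁅k, ⁅k, ⁅k, x⁆⁆⁆ * k * y
      + 3 • (⁅k, ⁅k, x⁆⁆ * k * ⁅k, y⁆ + ⁅k, x⁆ * k * ⁅k, ⁅k, y⁆⁆) + x * k * ⁅k, ⁅k, ⁅k, y⁆⁆⁆ := by
  simp only [Ring.lie_def]
  noncomm_ring

theorem ofNat_nsmul_eq_zero_iff_of_invertible (R : Type*) {M : Type*} [Semiring R]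
    [AddCommMonoid M] [Module R M] (n : ℕ) [n.AtLeastTwo] [Invertible (ofNat(n) : R)] {x : M} :
    (ofNat(n) : ℕ) • x = 0 ↔ x = 0 := by
  rw [← ofNat_smul_eq_nsmul R, (isUnit_of_invertible _).smul_eq_zero]

theorem mul_self_mul_self_eq_zero_of_central_lie {A : Type*} [Ring A] {k u c : A}
    (hc : ∀ x, Commute c x) (hcu : ⁅k, u⁆ = c) (hcku : c * k * u + u * k * c = 0)
    (hckc : c * k * c = 0) : c * c * c = 0 := by
  have hcck : c * c * k = 0 := by rw [mul_assoc, (hc k).eq, ← mul_assoc, hckc]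
  have hcuk : c * u * k = -(c * k * u) := by
    rw [mul_assoc, (hc _).eq, eq_neg_iff_add_eq_zero, add_comm, hcku]
  calc c * c * c = c * c * k * u - c * (c * u * k) := by rw [← hcu, Ring.lie_def]; noncomm_ring
    _ = 0 := by rw [hcuk, mul_neg, ← mul_assoc, ← mul_assoc, hcck]; simp

/-- in a `*`-semiprime algebra, if `k` is skew, `(ad k)^3` vanishes on the
skew elements `K`, and `[k,[k,K]] ⊆ Z(A)`, then `(ad k)^2` vanishes on `K`. -/
theorem stmt_19 {R A : Type*} [CommRing R] [Invertible (2 : R)] [Invertible (3 : R)]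
    [Ring A] [Algebra R A] [StarRing A]
    (hsemi : ∀ I : TwoSidedIdeal A, (∀ x ∈ I, star x ∈ I) →
      (∀ x ∈ I, ∀ y ∈ I, x * y = 0) → I = ⊥)
    (k : A) (hk : star k = -k)
    (h3 : ∀ t : A, star t = -t → ⁅k, ⁅k, ⁅k, t⁆⁆⁆ = 0)
    (hZ : ∀ t : A, star t = -t → ∀ x : A, ⁅k, ⁅k, t⁆⁆ * x = x * ⁅k, ⁅k, t⁆⁆) :
    ∀ t : A, star t = -t → ⁅k, ⁅k, t⁆⁆ = 0 := by
  intro t ht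
  obtain ⟨u, hu_def⟩ : ∃ u, ⁅k, t⁆ = u := ⟨_, rfl⟩
  obtain ⟨c, hc_def⟩ : ∃ c, ⁅k, u⁆ = c := ⟨_, rfl⟩
  have hu : star u = -u := hu_def ▸ star_lie_of_skew hk ht
  have hcentral : ∀ x, Commute c x := hc_def ▸ hu_def ▸ hZ t ht
  have hkc : ⁅k, c⁆ = 0 := hc_def ▸ hu_def ▸ h3 t ht
  have hcku : c * k * u + u * k * c = 0 := by
    have h := h3 (t * k * t) (star_mul_mul_of_skew hk ht ht)
    rw [lie_lie_lie_mul_mul, hu_def, hc_def, hkc] at h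
    simp only [zero_mul, mul_zero, zero_add, add_zero] at h
    rwa [ofNat_nsmul_eq_zero_iff_of_invertible R] at h
  have hckc : c * k * c = 0 := by
    -- the commutator bracket of a ring is additive only through this (non-global) instance
    let _ := LieRing.ofAssociativeRing (A := A)
    have hskew : star (t * k * u + u * k * t) = -(t * k * u + u * k * t) := by
      rw [star_add, star_mul_mul_of_skew hk ht hu, star_mul_mul_of_skew hk hu ht, neg_add, add_comm]
    have h := h3 _ hskew
    rw [lie_add, lie_add, lie_add, lie_lie_lie_mul_mul, lie_lie_lie_mul_mul, hu_def, hc_def,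
      hkc] at h
    simp only [lie_zero, zero_mul, mul_zero, zero_add, add_zero] at h
    rwa [← nsmul_add, ofNat_nsmul_eq_zero_iff_of_invertible R, ← two_nsmul,
      ofNat_nsmul_eq_zero_iff_of_invertible R] at h
  have hA : IsStarSemiprime A := hsemi
  rw [hu_def, hc_def]
  exact hA.eq_zero_of_mul_self_mul_self_eq_zero hcentral (hc_def ▸ star_lie_of_skew hk hu)
    (mul_self_mul_self_eq_zero_of_central_lie hcentral hc_def hcku hckc)
end
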